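/- arXiv:1704.08465 — 2 statements merged into one kernel-verified Lean document; each statement's English description precedes it below -/
import Mathlib

section
/- (Markov–Stieltjes inequalities) Let μ be a probability measure on ℝ with orthonormal polynomial family, and for N ∈ ℕ let (x_{k,N}, w_{k,N}), k = 1,…,N, be the N-point Gaussian quadrature nodes (ordered increasingly) and weights for μ. Then for every 1 ≤ m ≤ N, ∑_{k=1}^{m−1} w_{k,N} ≤ F(x_{m,N}) ≤ ∑_{k=1}^m w_{k,N}, where F(x) = μ((−∞, x]). -/
open Polynomial

noncomputable def qd (z : ℝ) (f : ℝ → ℝ) : ℝ → ℝ := fun t => (f t - f z) / (t - z)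

noncomputable def ddiff (f : ℝ → ℝ) : List ℝ → ℝ
  | [] => 0
  | [z] => f z
  | z :: w :: l => ddiff (qd z f) (w :: l)

@[simp] lemma ddiff_nil (f : ℝ → ℝ) : ddiff f [] = 0 := rfl
@[simp] lemma ddiff_single (f : ℝ → ℝ) (z : ℝ) : ddiff f [z] = f z := rfl
@[simp] lemma ddiff_cons (f : ℝ → ℝ) (z w : ℝ) (l : List ℝ) :
    ddiff f (z :: w :: l) = ddiff (qd z f) (w :: l) := rfl

lemma qd_apply (z : ℝ) (f : ℝ → ℝ) (t : ℝ) : qd z f t = (f t - f z) / (t - z) := rfl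

lemma ddiff_congr : ∀ (l : List ℝ) (f g : ℝ → ℝ), (∀ u ∈ l, f u = g u) → ddiff f l = ddiff g l
  | [], _, _, _ => rfl
  | [z], f, g, h => h z (by simp)
  | z :: w :: l, f, g, h => by
      rw [ddiff_cons, ddiff_cons]
      refine ddiff_congr (w :: l) _ _ (fun u hu => ?_)
      simp only [qd]
      rw [h u (by simp [hu]), h z (by simp)]

lemma ddiff_sub : ∀ (l : List ℝ) (f g : ℝ → ℝ),
    ddiff (fun t => f t - g t) l = ddiff f l - ddiff g l
  | [], _, _ => by simp
  | [z], _, _ => by simp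
  | z :: w :: l, f, g => by
      rw [ddiff_cons, ddiff_cons, ddiff_cons, ← ddiff_sub (w :: l)]
      congr 1
      funext t
      simp only [qd]
      ring

lemma ddiff_const_mul : ∀ (l : List ℝ) (a : ℝ) (f : ℝ → ℝ),
    ddiff (fun t => a * f t) l = a * ddiff f l
  | [], _, _ => by simp
  | [z], _, _ => by simp
  | z :: w :: l, a, f => by
      rw [ddiff_cons, ddiff_cons, ← ddiff_const_mul (w :: l)]
      congr 1
      funext t
      simp only [qd]
      ring

lemma qd_qd_comm (f : ℝ → ℝ) {u v w : ℝ} (huv : u ≠ v) (huw : u ≠ w) (hvw : v ≠ w) :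
    qd v (qd w f) u = qd w (qd v f) u := by
  simp only [qd]
  have h1 : u - v ≠ 0 := sub_ne_zero.2 huv
  have h2 : u - w ≠ 0 := sub_ne_zero.2 huw
  have h3 : v - w ≠ 0 := sub_ne_zero.2 hvw
  have h4 : w - v ≠ 0 := sub_ne_zero.2 hvw.symm
  field_simp
  ring

lemma qd_sub_qd (f : ℝ → ℝ) {u v w : ℝ} (huv : u ≠ v) (huw : u ≠ w) (hvw : v ≠ w) :
    qd v f u - qd w f u = (v - w) * qd w (qd v f) u := by
  simp only [qd]
  have h1 : u - v ≠ 0 := sub_ne_zero.2 huv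
  have h2 : u - w ≠ 0 := sub_ne_zero.2 huw
  have h4 : w - v ≠ 0 := sub_ne_zero.2 hvw.symm
  field_simp
  ring

lemma ddiff_perm (f : ℝ → ℝ) {l₁ l₂ : List ℝ} (p : l₁.Perm l₂) (h : l₁.Nodup) :
    ddiff f l₁ = ddiff f l₂ := by
  induction p generalizing f with
  | nil => rfl
  | cons a p ih =>
      rename_i t₁ t₂
      cases t₁ with
      | nil =>
          have : t₂ = [] := p.symm.eq_nil
          subst this; rfl
      | cons u t₁ =>
          cases t₂ with
          | nil => exact absurd p.eq_nil (by simp)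
          | cons v t₂ =>
              rw [ddiff_cons, ddiff_cons]
              exact ih _ (h.of_cons)
  | swap a b l =>
      -- goal: ddiff f (b :: a :: l) = ddiff f (a :: b :: l), h : (b :: a :: l).Nodup
      rw [List.nodup_cons, List.nodup_cons] at h
      obtain ⟨hb, ha, hl⟩ := h
      have hba : b ≠ a := fun e => hb (by simp [e])
      have hbl : b ∉ l := fun e => hb (by simp [e])
      have hal : a ∉ l := ha
      cases l with
      | nil =>
          simp only [ddiff_cons, ddiff_single, qd]
          rw [div_eq_div_iff (sub_ne_zero.2 hba.symm) (sub_ne_zero.2 hba)]; ring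
      | cons w l =>
          simp only [ddiff_cons]
          refine ddiff_congr _ _ _ (fun u hu => ?_)
          have hua : u ≠ a := fun e => hal (e ▸ hu)
          have hub : u ≠ b := fun e => hbl (e ▸ hu)
          exact qd_qd_comm f hua hub hba.symm
  | trans p₁ p₂ ih₁ ih₂ =>
      rw [ih₁ f h, ih₂ f (p₁.nodup_iff.mp h)]

lemma ddiff_head_sub (f : ℝ → ℝ) {v w : ℝ} {l : List ℝ} (hvw : v ≠ w)
    (hvl : v ∉ l) (hwl : w ∉ l) :
    ddiff f (v :: l) - ddiff f (w :: l) = (v - w) * ddiff f (v :: w :: l) := by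
  cases l with
  | nil =>
      simp only [ddiff_single, ddiff_cons, qd]
      have : w - v ≠ 0 := sub_ne_zero.2 hvw.symm
      field_simp
      ring
  | cons u l =>
      rw [ddiff_cons, ddiff_cons, ddiff_cons, ddiff_cons, ← ddiff_sub]
      have : ddiff (fun t => qd v f t - qd w f t) (u :: l)
          = ddiff (fun t => (v - w) * qd w (qd v f) t) (u :: l) := by
        refine ddiff_congr _ _ _ (fun s hs => ?_)
        have hsv : s ≠ v := fun e => hvl (e ▸ hs)
        have hsw : s ≠ w := fun e => hwl (e ▸ hs)
        exact qd_sub_qd f hsv hsw hvw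
      rw [this, ddiff_const_mul]

inductive Cone (β : ℝ) : (ℝ → ℝ) → Prop
  | const (c : ℝ) (hc : 0 ≤ c) : Cone β (fun _ => c)
  | pole (c : ℝ) (hc : β < c) : Cone β (fun t => (c - t)⁻¹)
  | add {f g : ℝ → ℝ} : Cone β f → Cone β g → Cone β (fun t => f t + g t)
  | mul {f g : ℝ → ℝ} : Cone β f → Cone β g → Cone β (fun t => f t * g t)

lemma Cone.nonneg {β : ℝ} {f : ℝ → ℝ} (hf : Cone β f) {z : ℝ} (hz : z ≤ β) : 0 ≤ f z := by
  induction hf with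
  | const c hc => exact hc
  | pole c hc => exact inv_nonneg.2 (by linarith)
  | add _ _ h1 h2 => exact add_nonneg h1 h2
  | mul _ _ h1 h2 => exact mul_nonneg h1 h2

lemma Cone.qd_exists {β : ℝ} {f : ℝ → ℝ} (hf : Cone β f) {z : ℝ} (hz : z ≤ β) :
    ∃ F, Cone β F ∧ ∀ t, t ≤ β → t ≠ z → qd z f t = F t := by
  induction hf with
  | const c hc =>
      exact ⟨fun _ => 0, Cone.const 0 le_rfl, fun t _ ht => by
        simp [qd]⟩
  | pole c hc =>
      refine ⟨fun t => (c - z)⁻¹ * (c - t)⁻¹,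
        Cone.mul (Cone.const _ (inv_nonneg.2 (by linarith))) (Cone.pole c hc), fun t htβ htz => ?_⟩
      have h1 : c - t ≠ 0 := by intro h; nlinarith [sub_eq_zero.1 h]
      have h2 : c - z ≠ 0 := by intro h; nlinarith [sub_eq_zero.1 h]
      have h3 : t - z ≠ 0 := sub_ne_zero.2 htz
      simp only [qd]
      field_simp
      ring
  | add hf hg ihf ihg =>
      obtain ⟨F, hF, hFe⟩ := ihf
      obtain ⟨G, hG, hGe⟩ := ihg
      refine ⟨fun t => F t + G t, Cone.add hF hG, fun t htβ htz => ?_⟩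
      have e1 := hFe t htβ htz
      have e2 := hGe t htβ htz
      simp only [qd] at e1 e2 ⊢
      rw [← e1, ← e2]
      ring
  | mul hf hg ihf ihg =>
      rename_i fa ga
      obtain ⟨F, hF, hFe⟩ := ihf
      obtain ⟨G, hG, hGe⟩ := ihg
      refine ⟨fun t => fa t * G t + (ga z) * F t,
        Cone.add (Cone.mul hf hG) (Cone.mul (Cone.const _ (hg.nonneg hz)) hF),
        fun t htβ htz => ?_⟩
      have e1 := hFe t htβ htz
      have e2 := hGe t htβ htz
      simp only [qd] at e1 e2 ⊢
      rw [← e1, ← e2]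
      have h3 : t - z ≠ 0 := sub_ne_zero.2 htz
      field_simp
      ring

def ConeOn (β : ℝ) (f : ℝ → ℝ) (S : Set ℝ) : Prop :=
  ∃ F, Cone β F ∧ ∀ t, t ≤ β → t ∉ S → f t = F t

lemma Cone.coneOn {β : ℝ} {f : ℝ → ℝ} (hf : Cone β f) (S : Set ℝ) : ConeOn β f S :=
  ⟨f, hf, fun _ _ _ => rfl⟩

lemma ConeOn.nonneg {β : ℝ} {f : ℝ → ℝ} {S : Set ℝ} (hf : ConeOn β f S)
    {z : ℝ} (hz : z ≤ β) (hzS : z ∉ S) : 0 ≤ f z := by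
  obtain ⟨F, hF, he⟩ := hf
  rw [he z hz hzS]; exact hF.nonneg hz

lemma ConeOn.qd {β : ℝ} {f : ℝ → ℝ} {S : Set ℝ} (hf : ConeOn β f S)
    {z : ℝ} (hz : z ≤ β) (hzS : z ∉ S) : ConeOn β (qd z f) (insert z S) := by
  obtain ⟨F, hF, he⟩ := hf
  obtain ⟨G, hG, hGe⟩ := hF.qd_exists hz
  refine ⟨G, hG, fun t htβ htS => ?_⟩
  have htz : t ≠ z := fun e => htS (e ▸ Set.mem_insert z S)
  have htS' : t ∉ S := fun e => htS (Set.mem_insert_of_mem _ e)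
  rw [← hGe t htβ htz]
  show (f t - f z) / (t - z) = (F t - F z) / (t - z)
  rw [he t htβ htS', he z hz hzS]

lemma ddiff_nonneg {β : ℝ} : ∀ (l : List ℝ) (f : ℝ → ℝ) (S : Set ℝ),
    ConeOn β f S → l.Nodup → (∀ u ∈ l, u ≤ β ∧ u ∉ S) → 0 ≤ ddiff f l
  | [], _, _, _, _, _ => le_rfl
  | [z], f, S, hf, _, hl => by
      exact hf.nonneg (hl z (by simp)).1 (hl z (by simp)).2
  | z :: w :: l, f, S, hf, hnd, hl => by
      rw [ddiff_cons]
      refine ddiff_nonneg (w :: l) _ (insert z S)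
        (hf.qd (hl z (by simp)).1 (hl z (by simp)).2) hnd.of_cons (fun u hu => ?_)
      have hz : u ≠ z := by
        rintro rfl
        exact (List.nodup_cons.1 hnd).1 hu
      exact ⟨(hl u (by simp [hu])).1, by
        simp only [Set.mem_insert_iff, not_or]
        exact ⟨hz, (hl u (by simp [hu])).2⟩⟩

lemma ddiff_raise {β : ℝ} : ∀ (l l' : List ℝ) (f : ℝ → ℝ) (S : Set ℝ),
    ConeOn β f S → l.Nodup → l'.Nodup → l.length = l'.length →
    (∀ u ∈ l, u ≤ β ∧ u ∉ S) → (∀ v ∈ l', v ≤ β ∧ v ∉ S) →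
    (∀ u ∈ l, ∀ v ∈ l', u < v) → ddiff f l ≤ ddiff f l'
  | [], [], _, _, _, _, _, _, _, _, _ => le_rfl
  | [], v :: l', _, _, _, _, _, hlen, _, _, _ => by simp at hlen
  | u :: l, [], _, _, _, _, _, hlen, _, _, _ => by simp at hlen
  | z :: l, y :: l', f, S, hf, hnd, hnd', hlen, hmem, hmem', hsep => by
      have hzy : z < y := hsep z (by simp) y (by simp)
      have hzl : z ∉ l := (List.nodup_cons.1 hnd).1
      have hyl : y ∉ l := fun hy => absurd (hsep y (by simp [hy]) y (by simp)) (lt_irrefl y)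
      have hstep : ddiff f (z :: l) ≤ ddiff f (y :: l) := by
        have h := ddiff_head_sub f (ne_of_lt hzy) hzl hyl
        have hpos : 0 ≤ ddiff f (z :: y :: l) := by
          refine ddiff_nonneg _ f S hf ?_ ?_
          · refine List.nodup_cons.2 ⟨?_, List.nodup_cons.2 ⟨hyl, hnd.of_cons⟩⟩
            simp only [List.mem_cons, not_or]
            exact ⟨ne_of_lt hzy, hzl⟩
          · intro u hu
            simp only [List.mem_cons] at hu
            rcases hu with rfl | rfl | h1
            · exact hmem u (by simp)
            · exact hmem' u (by simp)
            · exact hmem u (by simp [h1])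
        nlinarith [h]
      refine le_trans hstep ?_
      cases l with
      | nil =>
          cases l' with
          | nil => exact le_rfl
          | cons a b => simp at hlen
      | cons u l =>
          cases l' with
          | nil => simp at hlen
          | cons v l'' =>
              rw [ddiff_cons, ddiff_cons]
              refine ddiff_raise (u :: l) (v :: l'') (qd y f) (insert y S)
                (hf.qd (hmem' y (by simp)).1 (hmem' y (by simp)).2)
                hnd.of_cons hnd'.of_cons (by simpa using hlen) ?_ ?_ ?_
              · intro a ha
                have : a < y := hsep a (by simp [ha]) y (by simp)
                exact ⟨(hmem a (by simp [ha])).1, by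
                  simp only [Set.mem_insert_iff, not_or]
                  exact ⟨ne_of_lt this, (hmem a (by simp [ha])).2⟩⟩
              · intro a ha
                have : a ≠ y := by
                  rintro rfl
                  exact (List.nodup_cons.1 hnd').1 ha
                exact ⟨(hmem' a (by simp [ha])).1, by
                  simp only [Set.mem_insert_iff, not_or]
                  exact ⟨this, (hmem' a (by simp [ha])).2⟩⟩
              · intro a ha b hb
                exact hsep a (by simp [ha]) b (by simp [hb])

noncomputable def newton (f : ℝ → ℝ) : List ℝ → Polynomial ℝ
  | [] => 0
  | z :: l => Polynomial.C (f z) + (Polynomial.X - Polynomial.C z) * newton (qd z f) l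

@[simp] lemma newton_nil (f : ℝ → ℝ) : newton f [] = 0 := rfl
@[simp] lemma newton_cons (f : ℝ → ℝ) (z : ℝ) (l : List ℝ) :
    newton f (z :: l) = Polynomial.C (f z) + (Polynomial.X - Polynomial.C z) * newton (qd z f) l := rfl

lemma newton_natDegree : ∀ (l : List ℝ) (f : ℝ → ℝ), (newton f l).natDegree ≤ l.length
  | [], _ => by simp
  | z :: l, f => by
      rw [newton_cons]
      refine le_trans (Polynomial.natDegree_add_le _ _) ?_
      have h2 := newton_natDegree l (qd z f)
      have h3 : ((Polynomial.X - Polynomial.C z) * newton (qd z f) l).natDegree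
          ≤ 1 + l.length :=
        le_trans (Polynomial.natDegree_mul_le) (by rw [Polynomial.natDegree_X_sub_C]; omega)
      simp only [Polynomial.natDegree_C, List.length_cons, max_le_iff]
      exact ⟨by omega, by omega⟩

lemma newton_eval_node : ∀ (l : List ℝ) (f : ℝ → ℝ), l.Nodup →
    ∀ z ∈ l, (newton f l).eval z = f z
  | [], _, _, z, hz => by simp at hz
  | u :: l, f, hnd, z, hz => by
      simp only [List.mem_cons] at hz
      rcases hz with rfl | hz
      · simp
      · have hzu : z ≠ u := by
          rintro rfl
          exact (List.nodup_cons.1 hnd).1 hz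
        simp only [newton_cons, Polynomial.eval_add, Polynomial.eval_C, Polynomial.eval_mul,
          Polynomial.eval_sub, Polynomial.eval_X]
        rw [newton_eval_node l (qd u f) hnd.of_cons z hz]
        simp only [qd]
        have h0 : z - u ≠ 0 := sub_ne_zero.2 hzu
        field_simp
        ring

lemma newton_remainder : ∀ (l : List ℝ) (f : ℝ → ℝ) (t : ℝ), t ∉ l →
    f t = (newton f l).eval t + ddiff f (l ++ [t]) * ((l.map (fun z => t - z)).prod)
  | [], f, t, _ => by simp
  | z :: l, f, t, ht => by
      have htz : t ≠ z := fun e => ht (by simp [e])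
      have htl : t ∉ l := fun e => ht (by simp [e])
      have ih := newton_remainder l (qd z f) t htl
      have hd : ddiff f (z :: l ++ [t]) = ddiff (qd z f) (l ++ [t]) := by
        cases l with
        | nil => rfl
        | cons a l => rfl
      simp only [List.cons_append] at hd ⊢
      rw [hd]
      simp only [newton_cons, Polynomial.eval_add, Polynomial.eval_C, Polynomial.eval_mul,
        Polynomial.eval_sub, Polynomial.eval_X, List.map_cons, List.prod_cons]
      have hqd : (t - z) * qd z f t = f t - f z := by
        simp only [qd]
        have h0 : t - z ≠ 0 := sub_ne_zero.2 htz
        field_simp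
      linear_combination (t - z) * ih - hqd

lemma newton_eval_nonneg {β : ℝ} : ∀ (l : List ℝ) (f : ℝ → ℝ) (S : Set ℝ) (t : ℝ),
    ConeOn β f S → l.Nodup → (∀ u ∈ l, u ≤ β ∧ u ∉ S ∧ u ≤ t) →
    0 ≤ (newton f l).eval t
  | [], _, _, _, _, _, _ => by simp
  | z :: l, f, S, t, hf, hnd, hl => by
      simp only [newton_cons, Polynomial.eval_add, Polynomial.eval_C, Polynomial.eval_mul,
        Polynomial.eval_sub, Polynomial.eval_X]
      have h1 : 0 ≤ f z := hf.nonneg (hl z (by simp)).1 (hl z (by simp)).2.1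
      have h2 : 0 ≤ t - z := sub_nonneg.2 (hl z (by simp)).2.2
      have h3 : 0 ≤ (newton (qd z f) l).eval t := by
        refine newton_eval_nonneg l (qd z f) (insert z S) t
          (hf.qd (hl z (by simp)).1 (hl z (by simp)).2.1) hnd.of_cons (fun u hu => ?_)
        have hz : u ≠ z := by
          rintro rfl
          exact (List.nodup_cons.1 hnd).1 hu
        refine ⟨(hl u (by simp [hu])).1, ?_, (hl u (by simp [hu])).2.2⟩
        simp only [Set.mem_insert_iff, not_or]
        exact ⟨hz, (hl u (by simp [hu])).2.1⟩
      positivity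

lemma abs_list_prod_le {K : ℝ} (hK : 1 ≤ K) : ∀ (l : List ℝ), (∀ a ∈ l, |a| ≤ K) →
    |l.prod| ≤ K ^ l.length
  | [], _ => by simp
  | a :: l, h => by
      rw [List.prod_cons, List.length_cons, abs_mul, pow_succ]
      have h1 := h a (by simp)
      have h2 := abs_list_prod_le hK l (fun b hb => h b (by simp [hb]))
      have := abs_nonneg a
      have := abs_nonneg l.prod
      have hKp : (0:ℝ) ≤ K ^ l.length := pow_nonneg (by linarith) _
      nlinarith

noncomputable def nodeList (X : ℕ → ℝ) (ε : ℝ) : ℕ → List ℝ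
  | 0 => []
  | n + 1 => nodeList X ε n ++ [X n, X n + ε]

lemma nodeList_length (X : ℕ → ℝ) (ε : ℝ) : ∀ n, (nodeList X ε n).length = 2 * n
  | 0 => rfl
  | n + 1 => by
      simp only [nodeList, List.length_append, nodeList_length X ε n, List.length_cons,
        List.length_nil]
      omega

lemma nodeList_mem (X : ℕ → ℝ) (ε : ℝ) : ∀ n u, u ∈ nodeList X ε n ↔
    ∃ j, j < n ∧ (u = X j ∨ u = X j + ε)
  | 0, u => by simp [nodeList]
  | n + 1, u => by
      simp only [nodeList, List.mem_append, nodeList_mem X ε n, List.mem_cons,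
        List.not_mem_nil, or_false, List.mem_singleton]
      constructor
      · rintro (⟨j, hj, h⟩ | h | h)
        · exact ⟨j, by omega, h⟩
        · exact ⟨n, by omega, Or.inl h⟩
        · exact ⟨n, by omega, Or.inr h⟩
      · rintro ⟨j, hj, h⟩
        rcases Nat.lt_succ_iff_lt_or_eq.1 hj with hj' | rfl
        · exact Or.inl ⟨j, hj', h⟩
        · tauto

lemma nodeList_map_prod (X : ℕ → ℝ) (ε t : ℝ) : ∀ n,
    ((nodeList X ε n).map (fun z => t - z)).prod
      = ∏ j ∈ Finset.range n, ((t - X j) * (t - X j - ε))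
  | 0 => by simp [nodeList]
  | n + 1 => by
      rw [nodeList, List.map_append, List.prod_append, nodeList_map_prod X ε t n,
        Finset.prod_range_succ]
      simp only [List.map_cons, List.map_nil, List.prod_cons, List.prod_nil]
      ring

lemma nodeList_pairwise (X : ℕ → ℝ) (ε : ℝ) (hε : 0 < ε) :
    ∀ n, (∀ j k, j < k → k < n → X j + ε < X k) → (nodeList X ε n).Pairwise (· < ·)
  | 0, _ => List.Pairwise.nil
  | n + 1, hgap => by
      rw [nodeList, List.pairwise_append]
      refine ⟨nodeList_pairwise X ε hε n (fun j k h1 h2 => hgap j k h1 (by omega)), ?_, ?_⟩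
      · simp [hε]
      · intro u hu v hv
        rw [nodeList_mem] at hu
        obtain ⟨j, hj, hu⟩ := hu
        have h1 : X j + ε < X n := hgap j n hj (by omega)
        simp only [List.mem_cons, List.not_mem_nil, or_false, List.mem_singleton] at hv
        rcases hv with rfl | rfl <;> rcases hu with rfl | rfl <;> linarith

lemma cone_prod {β : ℝ} {ι : Type*} (s : Finset ι) (f : ι → ℝ → ℝ)
    (h : ∀ k ∈ s, Cone β (f k)) : Cone β (fun t => ∏ k ∈ s, f k t) := by
  classical
  induction s using Finset.induction_on with
  | empty => simpa using Cone.const 1 zero_le_one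
  | @insert a s' hk ih =>
      have : (fun t => ∏ k ∈ insert a s', f k t)
          = fun t => f a t * ∏ k ∈ s', f k t := by
        funext t; rw [Finset.prod_insert hk]
      rw [this]
      exact Cone.mul (h a (by simp)) (ih (fun k hks => h k (by simp [hks])))

open MeasureTheory

set_option maxHeartbeats 2000000 in
lemma gauss_upper
    (μ : Measure ℝ) [IsProbabilityMeasure μ]
    (hint : ∀ q : Polynomial ℝ, Integrable (fun t => q.eval t) μ)
    (N : ℕ) (x w : Fin N → ℝ) (hmono : StrictMono x)
    (hexact : ∀ q : Polynomial ℝ, q.natDegree ≤ 2 * N - 1 →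
      ∫ t, q.eval t ∂μ = ∑ k, w k * q.eval (x k))
    (m : Fin N) :
    (μ (Set.Iic (x m))).toReal ≤ ∑ k ∈ Finset.univ.filter (fun k => k ≤ m), w k := by
  classical
  have hsumw : ∑ k, w k = 1 := by
    have h := hexact 1 (by simp)
    simp only [Polynomial.eval_one, mul_one] at h
    rw [integral_const, probReal_univ] at h
    simpa using h.symm
  by_cases hm : (m : ℕ) + 1 = N
  · -- m is the last index
    have hall : Finset.univ.filter (fun k => k ≤ m) = Finset.univ := by
      ext k
      simp only [Finset.mem_filter, Finset.mem_univ, true_and, iff_true]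
      have : (k : ℕ) < N := k.isLt
      exact Fin.le_def.2 (by omega)
    rw [hall, hsumw]
    have h1 : μ (Set.Iic (x m)) ≤ 1 := prob_le_one
    have h2 : (μ (Set.Iic (x m))).toReal ≤ (1 : ENNReal).toReal :=
      ENNReal.toReal_mono (by simp) h1
    simpa using h2
  · -- main case
    set M := (m : ℕ) with hMdef
    have hMN : M + 1 < N := by have := m.isLt; omega
    set mm : Fin N := ⟨M + 1, hMN⟩ with hmmdef
    set b := x m with hbdef
    have hbmm : b < x mm := hmono (by simp [Fin.lt_def, hmmdef, hMdef])
    set β : ℝ := (b + x mm) / 2 with hβdef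
    have hbβ : b < β := by rw [hβdef]; linarith
    have hβmm : β < x mm := by rw [hβdef]; linarith
    have hpole : ∀ k : Fin N, m < k → β < x k := by
      intro k hk
      refine lt_of_lt_of_le hβmm (hmono.monotone ?_)
      exact Fin.le_def.2 (by show M + 1 ≤ (k : ℕ); exact Fin.lt_def.1 hk)
    have hMlt : M < N := by omega
    set xe : ℕ → ℝ := fun j => x ⟨min j M, by omega⟩ with hxedef
    have hxe : ∀ j (h : j ≤ M), xe j = x ⟨j, by omega⟩ := by
      intro j h
      simp only [hxedef]
      congr 1
      exact Fin.ext (by simp [min_eq_left h])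
    have hxe_mono : ∀ j k, j < k → k ≤ M → xe j < xe k := by
      intro j k h1 h2
      rw [hxe j (by omega), hxe k h2]
      exact hmono (Fin.lt_def.2 (by simpa using h1))
    have hxeM : xe M = b := by
      rw [hxe M le_rfl, hbdef]
    have hxe0b : xe 0 ≤ b := by
      rcases Nat.eq_zero_or_pos M with h | h
      · rw [← hxeM, h]
      · rw [← hxeM]; exact le_of_lt (hxe_mono 0 M h le_rfl)
    -- the minimal gap
    set E : Finset ℝ :=
      insert 1 ((Finset.range M).image (fun j => (xe (j + 1) - xe j) / 2)) with hEdef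
    have hEne : E.Nonempty := ⟨1, by simp [hEdef]⟩
    set ε₀ := E.min' hEne with hε₀def
    have hε₀pos : 0 < ε₀ := by
      have hmem := E.min'_mem hEne
      rw [← hε₀def] at hmem
      rw [hEdef] at hmem
      simp only [Finset.mem_insert, Finset.mem_image, Finset.mem_range] at hmem
      rcases hmem with h | ⟨j, hj, h⟩
      · rw [h]; norm_num
      · rw [← h]
        have := hxe_mono j (j + 1) (by omega) (by omega)
        linarith
    have hε₀gap : ∀ j, j < M → ε₀ ≤ (xe (j + 1) - xe j) / 2 := by
      intro j hj
      refine Finset.min'_le _ _ ?_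
      rw [hEdef]
      simp only [Finset.mem_insert, Finset.mem_image, Finset.mem_range]
      exact Or.inr ⟨j, hj, rfl⟩
    -- pole data
    set Kset : Finset (Fin N) := Finset.univ.filter (fun k => m < k) with hKdef
    have hKcard : Kset.card = N - 1 - M := by
      have h1 : Kset = Finset.Ioi m := by
        ext k; simp [hKdef, Finset.mem_Ioi]
      rw [h1, Fin.card_Ioi]
    have hKmem : ∀ k ∈ Kset, m < k := by intro k hk; simpa [hKdef] using hk
    set g : ℝ → ℝ :=
      fun t => ∏ k ∈ Kset, ((x k - b) ^ 2 * ((x k - t)⁻¹ * (x k - t)⁻¹)) with hgdef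
    have hgCone : Cone β g := by
      refine cone_prod _ _ (fun k hk => ?_)
      have h1 : β < x k := hpole k (hKmem k hk)
      have : (fun t => (x k - b) ^ 2 * ((x k - t)⁻¹ * (x k - t)⁻¹))
          = fun t => (fun _ => (x k - b) ^ 2 : ℝ → ℝ) t *
              ((fun t => (x k - t)⁻¹) t * (fun t => (x k - t)⁻¹) t) := rfl
      rw [this]
      exact Cone.mul (Cone.const _ (sq_nonneg _)) (Cone.mul (Cone.pole _ h1) (Cone.pole _ h1))
    have hgConeOn : ConeOn β g ∅ := hgCone.coneOn ∅
    set Apoly : Polynomial ℝ :=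
      ∏ k ∈ Kset, (Polynomial.C (((x k - b)⁻¹) ^ 2) * (Polynomial.X - Polynomial.C (x k)) ^ 2)
      with hApdef
    have hAdeg : Apoly.natDegree ≤ 2 * (N - 1 - M) := by
      rw [hApdef]
      refine le_trans (Polynomial.natDegree_prod_le _ _) ?_
      have h1 : ∀ k ∈ Kset,
          (Polynomial.C (((x k - b)⁻¹) ^ 2) * (Polynomial.X - Polynomial.C (x k)) ^ 2).natDegree
            ≤ 2 := by
        intro k _
        refine le_trans (Polynomial.natDegree_mul_le) ?_
        simp only [Polynomial.natDegree_C, zero_add]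
        refine le_trans (Polynomial.natDegree_pow_le) ?_
        rw [Polynomial.natDegree_X_sub_C]
      refine le_trans (Finset.sum_le_sum h1) ?_
      rw [Finset.sum_const, hKcard, smul_eq_mul]
      omega
    have hAeval : ∀ t, Apoly.eval t = ∏ k ∈ Kset, (((x k - b)⁻¹) ^ 2 * (t - x k) ^ 2) := by
      intro t
      rw [hApdef, Polynomial.eval_prod]
      exact Finset.prod_congr rfl (fun k _ => by simp)
    have hAnn : ∀ t, 0 ≤ Apoly.eval t := by
      intro t
      rw [hAeval]
      exact Finset.prod_nonneg (fun k _ => mul_nonneg (sq_nonneg _) (sq_nonneg _))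
    have hAg : ∀ t, t ≤ b → Apoly.eval t * g t = 1 := by
      intro t ht
      rw [hAeval, hgdef, ← Finset.prod_mul_distrib]
      refine Finset.prod_eq_one (fun k hk => ?_)
      have h1 : β < x k := hpole k (hKmem k hk)
      have h2 : x k - b ≠ 0 := by intro h; nlinarith [sub_eq_zero.1 h]
      have h3 : x k - t ≠ 0 := by intro h; nlinarith [sub_eq_zero.1 h]
      field_simp
      ring
    set CA : ℝ := ∏ k ∈ Kset, (((x k - b)⁻¹) ^ 2 * (x k - xe 0) ^ 2) with hCAdef
    have hCA0 : 0 ≤ CA :=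
      Finset.prod_nonneg (fun k _ => mul_nonneg (sq_nonneg _) (sq_nonneg _))
    have hAle : ∀ t, xe 0 ≤ t → t ≤ b → Apoly.eval t ≤ CA := by
      intro t h1 h2
      rw [hAeval, hCAdef]
      refine Finset.prod_le_prod (fun k _ => mul_nonneg (sq_nonneg _) (sq_nonneg _))
        (fun k hk => ?_)
      have h3 : b < x k := lt_trans hbβ (hpole k (hKmem k hk))
      have h4 : (t - x k) ^ 2 ≤ (x k - xe 0) ^ 2 := by nlinarith
      nlinarith [sq_nonneg ((x k - b)⁻¹)]
    set Kb : ℝ := b - xe 0 + 1 with hKbdef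
    have hKb1 : 1 ≤ Kb := by rw [hKbdef]; linarith
    set C1 : ℝ := Kb ^ (2 * M + 2) with hC1def
    have hC10 : 0 ≤ C1 := pow_nonneg (by linarith) _
    set η : ℝ := (β - b) / (2 * M + 3) with hηdef
    have hηpos : 0 < η := by
      rw [hηdef]
      apply div_pos (by linarith)
      positivity
    set Y : List ℝ := (List.range (2 * M + 2)).map (fun i => b + (i + 1 : ℕ) * η) with hYdef
    have hYlen : Y.length = 2 * M + 2 := by simp [hYdef]
    have hYmem : ∀ v ∈ Y, b < v ∧ v ≤ β := by
      intro v hv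
      rw [hYdef] at hv
      simp only [List.mem_map, List.mem_range] at hv
      obtain ⟨i, hi, rfl⟩ := hv
      push_cast
      have hca : (0:ℝ) ≤ (i:ℝ) := Nat.cast_nonneg i
      have h1 : (i : ℝ) < 2 * M + 2 := by exact_mod_cast hi
      have hmul : 0 < ((i:ℝ) + 1) * η := mul_pos (by linarith) hηpos
      constructor
      · linarith
      · have hne : (2 * (M : ℝ) + 3) ≠ 0 := by positivity
        have h2 : b + (2 * (M : ℝ) + 3) * η = β := by
          rw [hηdef]; field_simp; ring
        nlinarith [hηpos]
    have hYnd : Y.Nodup := by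
      rw [hYdef]
      refine List.Nodup.map ?_ List.nodup_range
      intro i j hij
      simp only at hij
      have h : ((i + 1 : ℕ) : ℝ) * η = ((j + 1 : ℕ) : ℝ) * η := by linarith [hij]
      have h2 : ((i + 1 : ℕ) : ℝ) = ((j + 1 : ℕ) : ℝ) :=
        mul_right_cancel₀ (ne_of_gt hηpos) h
      have h3 : i + 1 = j + 1 := by exact_mod_cast h2
      omega
    set C0 : ℝ := ddiff g Y with hC0def
    have hC00 : 0 ≤ C0 := by
      rw [hC0def]
      exact ddiff_nonneg Y g ∅ hgConeOn hYnd (fun u hu => ⟨(hYmem u hu).2, by simp⟩)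
    set Cc : ℝ := CA * C0 * C1 with hCcdef
    have hCc0 : 0 ≤ Cc := by positivity
    have key : ∀ ε : ℝ, 0 < ε → ε < ε₀ →
        (μ (Set.Iic b)).toReal ≤ (∑ k ∈ Finset.univ.filter (fun k => k ≤ m), w k) + Cc * ε := by
      intro ε hε hεlt
      have hgapε : ∀ j k, j < k → k ≤ M → xe j + ε < xe k := by
        intro j k hjk hkM
        have h1 := hε₀gap j (by omega)
        have h2 : xe (j + 1) ≤ xe k := by
          rcases eq_or_lt_of_le (Nat.succ_le_of_lt hjk) with h | h
          · exact le_of_eq (congrArg xe h)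
          · exact le_of_lt (hxe_mono _ _ h hkM)
        have h3 : xe j < xe (j + 1) := hxe_mono j (j + 1) (by omega) (by omega)
        linarith
      set L : List ℝ := nodeList xe ε M ++ [b] with hLdef
      have hnodemem : ∀ u ∈ nodeList xe ε M, ∃ j, j < M ∧ (u = xe j ∨ u = xe j + ε) := by
        intro u hu
        rwa [nodeList_mem] at hu
      have hnode_lt_b : ∀ u ∈ nodeList xe ε M, u < b := by
        intro u hu
        obtain ⟨j, hj, hu⟩ := hnodemem u hu
        have h1 : xe j + ε < xe M := hgapε j M hj le_rfl
        rw [hxeM] at h1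
        rcases hu with rfl | rfl <;> linarith
      have hLpair : L.Pairwise (· < ·) := by
        rw [hLdef, List.pairwise_append]
        refine ⟨nodeList_pairwise xe ε hε M (fun j k h1 h2 => hgapε j k h1 (by omega)),
          by simp, ?_⟩
        intro u hu v hv
        simp only [List.mem_singleton] at hv
        subst hv
        exact hnode_lt_b u hu
      have hLnd : L.Nodup := hLpair.imp ne_of_lt
      have hLb : ∀ u ∈ L, xe 0 ≤ u ∧ u ≤ b := by
        intro u hu
        rw [hLdef, List.mem_append] at hu
        rcases hu with hu | hu
        · obtain ⟨j, hj, hu2⟩ := hnodemem u hu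
          have h0 : xe 0 ≤ xe j := by
            rcases Nat.eq_zero_or_pos j with h | h
            · rw [h]
            · exact le_of_lt (hxe_mono 0 j h (by omega))
          have h1 : u < b := hnode_lt_b u hu
          constructor
          · rcases hu2 with rfl | rfl <;> linarith
          · linarith
        · simp only [List.mem_singleton] at hu
          subst hu
          exact ⟨hxe0b, le_rfl⟩
      have hLβ : ∀ u ∈ L, u ≤ β := fun u hu => le_trans (hLb u hu).2 (le_of_lt hbβ)
      have hLlen : L.length = 2 * M + 1 := by
        rw [hLdef]
        simp [nodeList_length]
      set Np := newton g L with hNpdef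
      set q : Polynomial ℝ := Apoly * Np + Polynomial.C (Cc * ε) with hqdef
      have hqdeg : q.natDegree ≤ 2 * N - 1 := by
        rw [hqdef]
        refine le_trans (Polynomial.natDegree_add_le _ _) ?_
        simp only [Polynomial.natDegree_C, max_le_iff]
        constructor
        · refine le_trans (Polynomial.natDegree_mul_le) ?_
          have h1 := newton_natDegree L g
          rw [hLlen] at h1
          rw [hNpdef]
          omega
        · omega
      have hxmemL : ∀ k : Fin N, k ≤ m → x k ∈ L := by
        intro k hk
        have hkM : (k : ℕ) ≤ M := hk
        rcases eq_or_lt_of_le hkM with h | h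
        · rw [hLdef]
          refine List.mem_append.2 (Or.inr ?_)
          simp only [List.mem_singleton]
          rw [hbdef]
          exact congrArg x (Fin.ext h)
        · rw [hLdef]
          refine List.mem_append.2 (Or.inl ?_)
          rw [nodeList_mem]
          refine ⟨(k : ℕ), h, Or.inl ?_⟩
          rw [hxe _ (le_of_lt h)]
      have hxkb : ∀ k : Fin N, k ≤ m → x k ≤ b := by
        intro k hk
        rw [hbdef]
        exact hmono.monotone hk
      have hqval : ∀ k : Fin N, q.eval (x k) = (if k ≤ m then 1 else 0) + Cc * ε := by
        intro k
        rw [hqdef]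
        simp only [Polynomial.eval_add, Polynomial.eval_mul, Polynomial.eval_C]
        by_cases hk : k ≤ m
        · rw [if_pos hk]
          have h1 : Np.eval (x k) = g (x k) := by
            rw [hNpdef]
            exact newton_eval_node L g hLnd (x k) (hxmemL k hk)
          rw [h1, hAg (x k) (hxkb k hk)]
        · rw [if_neg hk]
          have hkK : k ∈ Kset := by
            rw [hKdef]
            simp only [Finset.mem_filter, Finset.mem_univ, true_and]
            exact lt_of_not_ge hk
          have h1 : Apoly.eval (x k) = 0 := by
            rw [hAeval]
            refine Finset.prod_eq_zero hkK ?_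
            simp
          rw [h1]
          ring
      have hCcε : 0 ≤ Cc * ε := mul_nonneg hCc0 (le_of_lt hε)
      have hpt : ∀ t : ℝ, (Set.Iic b).indicator (fun _ => (1 : ℝ)) t ≤ q.eval t := by
        intro t
        by_cases ht : t ≤ b
        · rw [Set.indicator_of_mem (Set.mem_Iic.2 ht)]
          rw [hqdef]
          simp only [Polynomial.eval_add, Polynomial.eval_mul, Polynomial.eval_C]
          have hmain : 1 - Cc * ε ≤ Apoly.eval t * Np.eval t := by
            by_cases htL : t ∈ L
            · have h1 : Np.eval t = g t := by
                rw [hNpdef]; exact newton_eval_node L g hLnd t htL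
              rw [h1, hAg t ht]
              linarith
            · -- t is not a node: Newton remainder analysis
              have hrem := newton_remainder L g t htL
              set D := ddiff g (L ++ [t]) with hDdef
              set Om := ((L.map (fun z => t - z)).prod) with hOmdef
              have hLtnd : (L ++ [t]).Nodup := by
                rw [List.nodup_append]
                refine ⟨hLnd, List.nodup_singleton t, ?_⟩
                intro a ha b hb hab
                simp only [List.mem_singleton] at hb
                subst hb
                subst hab
                exact htL ha
              have hLtmem : ∀ u ∈ L ++ [t], u ≤ β ∧ u ∉ (∅ : Set ℝ) := by
                intro u hu
                rw [List.mem_append] at hu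
                rcases hu with hu | hu
                · exact ⟨hLβ u hu, by simp⟩
                · simp only [List.mem_singleton] at hu
                  subst hu
                  exact ⟨le_trans ht (le_of_lt hbβ), by simp⟩
              have hLtb : ∀ u ∈ L ++ [t], u ≤ b := by
                intro u hu
                rw [List.mem_append] at hu
                rcases hu with hu | hu
                · exact (hLb u hu).2
                · simp only [List.mem_singleton] at hu
                  subst hu
                  exact ht
              have hD0 : 0 ≤ D := by
                rw [hDdef]
                exact ddiff_nonneg (L ++ [t]) g ∅ hgConeOn hLtnd hLtmem
              have hANp : Apoly.eval t * Np.eval t = 1 - Apoly.eval t * (D * Om) := by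
                have hg2 : g t = Np.eval t + D * Om := by
                  rw [hNpdef, hDdef, hOmdef]
                  exact hrem
                have hag := hAg t ht
                linear_combination hag - (Apoly.eval t) * hg2
              by_cases hbad : ∃ j, j < M ∧ xe j < t ∧ t < xe j + ε
              · obtain ⟨j, hjM, hj1, hj2⟩ := hbad
                have hDC0 : D ≤ C0 := by
                  rw [hDdef, hC0def]
                  refine ddiff_raise (L ++ [t]) Y g ∅ hgConeOn hLtnd hYnd ?_ hLtmem
                    (fun v hv => ⟨(hYmem v hv).2, by simp⟩) ?_
                  · rw [List.length_append, hLlen, hYlen]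
                    simp
                  · intro u hu v hv
                    exact lt_of_le_of_lt (hLtb u hu) (hYmem v hv).1
                have hxjL : xe j ∈ L := by
                  rw [hLdef]
                  refine List.mem_append.2 (Or.inl ?_)
                  rw [nodeList_mem]
                  exact ⟨j, hjM, Or.inl rfl⟩
                have hmemmap : (t - xe j) ∈ L.map (fun z => t - z) :=
                  List.mem_map.2 ⟨xe j, hxjL, rfl⟩
                have hperm := List.perm_cons_erase hmemmap
                have hprodeq : Om = (t - xe j) * ((L.map (fun z => t - z)).erase (t - xe j)).prod := by
                  rw [hOmdef, hperm.prod_eq, List.prod_cons]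
                have hxe0j : xe 0 ≤ xe j := by
                  rcases Nat.eq_zero_or_pos j with h | h
                  · rw [h]
                  · exact le_of_lt (hxe_mono 0 j h (by omega))
                have hxe0t : xe 0 ≤ t := le_trans hxe0j (le_of_lt hj1)
                have habs : ∀ a ∈ (L.map (fun z => t - z)).erase (t - xe j), |a| ≤ Kb := by
                  intro a ha
                  have ha2 := List.mem_of_mem_erase ha
                  obtain ⟨z, hz, rfl⟩ := List.mem_map.1 ha2
                  have h1 := hLb z hz
                  rw [abs_le, hKbdef]
                  constructor <;> linarith [h1.1, h1.2]
                have hOmabs : |Om| ≤ ε * C1 := by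
                  rw [hprodeq, abs_mul]
                  have h1 : |t - xe j| ≤ ε := by
                    rw [abs_le]
                    constructor <;> linarith
                  have h2 := abs_list_prod_le hKb1 _ habs
                  have hlen2 : ((L.map (fun z => t - z)).erase (t - xe j)).length ≤ 2 * M + 2 := by
                    have h3 := List.length_erase_le (a := t - xe j) (l := L.map (fun z => t - z))
                    rw [List.length_map, hLlen] at h3
                    omega
                  have h4 : Kb ^ ((L.map (fun z => t - z)).erase (t - xe j)).length ≤ C1 := by
                    rw [hC1def]
                    exact pow_le_pow_right₀ hKb1 hlen2
                  exact mul_le_mul h1 (le_trans h2 h4) (abs_nonneg _) (le_of_lt hε)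
                have hA_le := hAle t hxe0t ht
                have hfin : Apoly.eval t * (D * Om) ≤ Cc * ε := by
                  have s1 : D * Om ≤ C0 * (ε * C1) := by
                    have u1 : D * Om ≤ D * |Om| :=
                      mul_le_mul_of_nonneg_left (le_abs_self Om) hD0
                    have u2 : D * |Om| ≤ D * (ε * C1) :=
                      mul_le_mul_of_nonneg_left hOmabs hD0
                    have u3 : D * (ε * C1) ≤ C0 * (ε * C1) :=
                      mul_le_mul_of_nonneg_right hDC0
                        (mul_nonneg (le_of_lt hε) hC10)
                    linarith
                  have s2 : Apoly.eval t * (D * Om) ≤ Apoly.eval t * (C0 * (ε * C1)) :=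
                    mul_le_mul_of_nonneg_left s1 (hAnn t)
                  have s3 : Apoly.eval t * (C0 * (ε * C1)) ≤ CA * (C0 * (ε * C1)) :=
                    mul_le_mul_of_nonneg_right hA_le
                      (mul_nonneg hC00 (mul_nonneg (le_of_lt hε) hC10))
                  have s4 : CA * (C0 * (ε * C1)) = Cc * ε := by
                    rw [hCcdef]; ring
                  linarith
                rw [hANp]
                linarith
              · -- away from the bad intervals : Om ≤ 0
                have hOm0 : Om ≤ 0 := by
                  rw [hOmdef, hLdef, List.map_append, List.prod_append, nodeList_map_prod]
                  simp only [List.map_cons, List.map_nil, List.prod_cons, List.prod_nil, mul_one]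
                  refine mul_nonpos_of_nonneg_of_nonpos ?_ (by linarith)
                  refine Finset.prod_nonneg (fun j hj => ?_)
                  have hjM := Finset.mem_range.1 hj
                  have hnb : ¬(xe j < t ∧ t < xe j + ε) := fun hcon => hbad ⟨j, hjM, hcon.1, hcon.2⟩
                  rcases le_or_gt t (xe j) with h | h
                  · nlinarith
                  · have h2 : xe j + ε ≤ t := by
                      by_contra hcon2
                      push_neg at hcon2
                      exact hnb ⟨h, hcon2⟩
                    nlinarith
                have hneg : Apoly.eval t * (D * Om) ≤ 0 :=
                  mul_nonpos_of_nonneg_of_nonpos (hAnn t)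
                    (mul_nonpos_of_nonneg_of_nonpos hD0 hOm0)
                rw [hANp]
                linarith
          linarith
        · rw [Set.indicator_of_notMem (by simpa using ht)]
          rw [hqdef]
          simp only [Polynomial.eval_add, Polynomial.eval_mul, Polynomial.eval_C]
          have h1 : 0 ≤ Np.eval t := by
            rw [hNpdef]
            refine newton_eval_nonneg L g ∅ t hgConeOn hLnd (fun u hu => ?_)
            exact ⟨hLβ u hu, by simp, le_trans (hLb u hu).2 (le_of_lt (lt_of_not_ge ht))⟩
          have h2 := hAnn t
          nlinarith
      have hind : Integrable ((Set.Iic b).indicator (fun _ => (1 : ℝ))) μ :=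
        (integrable_const (1 : ℝ)).indicator measurableSet_Iic
      have hcomp := integral_mono hind (hint q) hpt
      rw [integral_indicator_const _ measurableSet_Iic] at hcomp
      rw [hexact q hqdeg] at hcomp
      have hsum2 : ∑ k, w k * q.eval (x k)
          = (∑ k ∈ Finset.univ.filter (fun k => k ≤ m), w k) + Cc * ε := by
        have hterm : ∀ k : Fin N, w k * q.eval (x k)
            = (if k ≤ m then w k else 0) + w k * (Cc * ε) := by
          intro k
          rw [hqval k]
          by_cases hk : k ≤ m <;> simp [hk] <;> ring
        rw [Finset.sum_congr rfl (fun k _ => hterm k), Finset.sum_add_distrib]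
        congr 1
        · rw [← Finset.sum_filter]
        · rw [← Finset.sum_mul, hsumw, one_mul]
      rw [hsum2] at hcomp
      simp only [smul_eq_mul, mul_one] at hcomp
      exact hcomp
    by_contra hcon
    push_neg at hcon
    have hd0 : 0 < (μ (Set.Iic b)).toReal
        - (∑ k ∈ Finset.univ.filter (fun k => k ≤ m), w k) := by linarith
    set S := ∑ k ∈ Finset.univ.filter (fun k => k ≤ m), w k with hSdef
    set F := (μ (Set.Iic b)).toReal with hFdef
    have hδ : 0 < F - S := hd0
    set ε : ℝ := min (ε₀ / 2) ((F - S) / (Cc + 1)) with hεdef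
    have hε1 : 0 < ε := lt_min (by linarith) (div_pos hδ (by linarith))
    have hε2 : ε < ε₀ := lt_of_le_of_lt (min_le_left _ _) (by linarith)
    have hk := key ε hε1 hε2
    have h4 : ε ≤ (F - S) / (Cc + 1) := min_le_right _ _
    have h5 : Cc * ε ≤ Cc * ((F - S) / (Cc + 1)) := mul_le_mul_of_nonneg_left h4 hCc0
    have hd : ((F - S) / (Cc + 1)) * (Cc + 1) = F - S :=
      div_mul_cancel₀ _ (ne_of_gt (by linarith))
    have hdpos : 0 < (F - S) / (Cc + 1) := div_pos hδ (by linarith)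
    have h6 : Cc * ((F - S) / (Cc + 1)) < F - S := by nlinarith
    linarith


lemma integrable_poly (μ : Measure ℝ) (hmom : ∀ k : ℕ, Integrable (fun t : ℝ => t ^ k) μ)
    (q : Polynomial ℝ) : Integrable (fun t => q.eval t) μ := by
  have h : (fun t : ℝ => q.eval t)
      = fun t => ∑ i ∈ Finset.range (q.natDegree + 1), q.coeff i * t ^ i := by
    funext t
    rw [Polynomial.eval_eq_sum_range]
  rw [h]
  exact integrable_finset_sum _ (fun i _ => (hmom i).const_mul _)

/-- Markov–Stieltjes inequalities: if `(x_k, w_k)`, `k = 1, …, N`, is the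
`N`-point Gaussian quadrature rule for a probability measure `μ` (the nodes being the
increasingly ordered zeros of the degree-`N` orthonormal polynomial, the weights positive
and the rule exact on polynomials of degree `≤ 2N-1`), then for every `m`,
`∑_{k<m} w_k ≤ F(x_m) ≤ ∑_{k≤m} w_k`, where `F(x) = μ((-∞,x])`. -/
theorem markov_stieltjes
    (μ : Measure ℝ) [IsProbabilityMeasure μ]
    (hmom : ∀ k : ℕ, Integrable (fun t : ℝ => t ^ k) μ)
    (p : ℕ → Polynomial ℝ)
    (hdeg : ∀ k, (p k).natDegree = k)
    (horth : ∀ j k, ∫ t, (p j).eval t * (p k).eval t ∂μ = if j = k then 1 else 0)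
    (N : ℕ) (hN : 0 < N)
    (x : Fin N → ℝ) (w : Fin N → ℝ)
    (hmono : StrictMono x)
    (hzero : ∀ k, (p N).eval (x k) = 0)
    (hwpos : ∀ k, 0 < w k)
    (hexact : ∀ q : Polynomial ℝ, q.natDegree ≤ 2 * N - 1 →
      ∫ t, q.eval t ∂μ = ∑ k, w k * q.eval (x k)) :
    ∀ m : Fin N,
      (∑ k ∈ Finset.univ.filter (fun k => k < m), w k) ≤ (μ (Set.Iic (x m))).toReal ∧
      (μ (Set.Iic (x m))).toReal ≤ ∑ k ∈ Finset.univ.filter (fun k => k ≤ m), w k := by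
  intro m
  have hint := integrable_poly μ hmom
  have hsumw : ∑ k, w k = 1 := by
    have h := hexact 1 (by simp)
    simp only [Polynomial.eval_one, mul_one] at h
    rw [integral_const, probReal_univ] at h
    simpa using h.symm
  have hupper := gauss_upper μ hint N x w hmono hexact m
  refine ⟨?_, hupper⟩
  -- lower bound via reflection
  set ν := μ.map (fun t : ℝ => -t) with hν
  haveI : IsProbabilityMeasure ν := Measure.isProbabilityMeasure_map (measurable_neg.aemeasurable)
  have hint' : ∀ q : Polynomial ℝ, Integrable (fun t => q.eval t) ν := by
    intro q
    rw [hν, integrable_map_measure (q.continuous.aestronglyMeasurable)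
      measurable_neg.aemeasurable]
    have h : ((fun t : ℝ => q.eval t) ∘ (fun t : ℝ => -t))
        = fun t => (q.comp (-Polynomial.X)).eval t := by
      funext t
      simp [Polynomial.eval_comp]
    rw [h]
    exact hint _
  set x' : Fin N → ℝ := fun k => -x k.rev with hx'def
  set w' : Fin N → ℝ := fun k => w k.rev with hw'def
  have hmono' : StrictMono x' := by
    intro a c hac
    simp only [hx'def, neg_lt_neg_iff]
    exact hmono (Fin.rev_lt_rev.mpr hac)
  have hcompdeg : ∀ q : Polynomial ℝ, (q.comp (-Polynomial.X)).natDegree = q.natDegree := by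
    intro q
    rw [Polynomial.natDegree_comp]
    simp
  have hexact' : ∀ q : Polynomial ℝ, q.natDegree ≤ 2 * N - 1 →
      ∫ t, q.eval t ∂ν = ∑ k, w' k * q.eval (x' k) := by
    intro q hq
    rw [hν, integral_map measurable_neg.aemeasurable (q.continuous.aestronglyMeasurable)]
    have h : (fun t : ℝ => q.eval (-t)) = fun t => (q.comp (-Polynomial.X)).eval t := by
      funext t
      simp [Polynomial.eval_comp]
    simp only [h]
    rw [hexact (q.comp (-Polynomial.X)) (by rw [hcompdeg]; exact hq)]
    refine (Fintype.sum_bijective Fin.rev Fin.rev_bijective _ _ (fun k => ?_)).symm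
    simp [hw'def, hx'def, Fin.rev_rev, Polynomial.eval_comp]
  have hlow := gauss_upper ν hint' N x' w' hmono' hexact' m.rev
  have hx'm : x' m.rev = -(x m) := by simp [hx'def, Fin.rev_rev]
  have hνIic : ν (Set.Iic (-(x m))) = μ (Set.Ici (x m)) := by
    rw [hν, Measure.map_apply measurable_neg measurableSet_Iic]
    congr 1
    ext t
    simp
  rw [hx'm, hνIic] at hlow
  have hsumrev : ∑ k ∈ Finset.univ.filter (fun k => k ≤ m.rev), w' k
      = ∑ k ∈ Finset.univ.filter (fun k => m ≤ k), w k := by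
    rw [Finset.sum_filter, Finset.sum_filter]
    refine Fintype.sum_bijective Fin.rev Fin.rev_bijective _ _ (fun k => ?_)
    have hiff : k ≤ m.rev ↔ m ≤ k.rev := by
      rw [← Fin.rev_le_rev, Fin.rev_rev]
    by_cases h : k ≤ m.rev
    · rw [if_pos h, if_pos (hiff.1 h)]
    · rw [if_neg h, if_neg (fun hc => h (hiff.2 hc))]
  rw [hsumrev] at hlow
  have h2 : (μ (Set.Iic (x m))).toReal + (μ (Set.Ioi (x m))).toReal = 1 := by
    rw [← ENNReal.toReal_add (measure_ne_top μ _) (measure_ne_top μ _)]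
    have h3 : μ (Set.Iic (x m)) + μ (Set.Ioi (x m)) = 1 := by
      rw [← measure_univ (μ := μ), ← Set.Iic_union_Ioi (a := x m)]
      exact (measure_union (Set.Iic_disjoint_Ioi le_rfl) measurableSet_Ioi).symm
    rw [h3]
    simp
  have h3 : (μ (Set.Ioi (x m))).toReal ≤ (μ (Set.Ici (x m))).toReal :=
    ENNReal.toReal_mono (measure_ne_top μ _) (measure_mono Set.Ioi_subset_Ici_self)
  have h5 : (∑ k ∈ Finset.univ.filter (fun k => k < m), w k)
      + (∑ k ∈ Finset.univ.filter (fun k => m ≤ k), w k) = 1 := by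
    rw [← hsumw, ← Finset.sum_filter_add_sum_filter_not Finset.univ (fun k => k < m) w]
    congr 1
    refine Finset.sum_congr ?_ (fun _ _ => rfl)
    ext k
    simp [not_lt]
  linarith
end

section
/- Let p_n be orthonormal polynomials for μ and define C_n(x) = p_n(x)/√(∑_{j=0}^{n−1} p_j(x)²) for n ≥ 1, with C_0 ≡ p_0 = 1/√(b_0). Then for n ≥ 2 the C_n satisfy C_{n+1}(x) = [ (x − a_n) C_n(x) − √(b_n) C_{n−1}(x)/√(1 + C_{n−1}(x)²) ] / [ √(b_{n+1}) √(1 + C_n(x)²) ]. -/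
open Polynomial

/-- The normalized quantities `C_n(x) = p_n(x)/√(∑_{j<n} p_j(x)²)` satisfy,
for `n ≥ 2`, the recurrence
`C_{n+1} = [(x - a_n) C_n - √(b_n) C_{n-1}/√(1+C_{n-1}²)] / [√(b_{n+1}) √(1+C_n²)]`. -/
theorem normalized_polynomial_recurrence
    (a : ℕ → ℝ) (b : ℕ → ℝ) (hb : ∀ j, 0 < b j)
    (p : ℕ → Polynomial ℝ)
    (hdeg : ∀ k, (p k).natDegree = k)
    (hp0 : p 0 = Polynomial.C (1 / Real.sqrt (b 0)))
    (hrec : ∀ k : ℕ, Polynomial.X * p k =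
      (if k = 0 then 0 else Real.sqrt (b k) • p (k - 1)) + a k • p k
        + Real.sqrt (b (k + 1)) • p (k + 1))
    (C : ℕ → ℝ → ℝ)
    (hC0 : ∀ x, C 0 x = (p 0).eval x)
    (hC : ∀ n, 1 ≤ n → ∀ x, C n x =
      (p n).eval x / Real.sqrt (∑ j ∈ Finset.range n, ((p j).eval x) ^ 2)) :
    ∀ n, 2 ≤ n → ∀ x : ℝ,
      C (n + 1) x =
        ((x - a n) * C n x -
          Real.sqrt (b n) * C (n - 1) x / Real.sqrt (1 + (C (n - 1) x) ^ 2)) /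
          (Real.sqrt (b (n + 1)) * Real.sqrt (1 + (C n x) ^ 2)) := by
  intro n hn x
  -- sums are positive
  have hS : ∀ m : ℕ, 1 ≤ m → 0 < ∑ j ∈ Finset.range m, ((p j).eval x) ^ 2 := by
    intro m hm
    have h0 : 0 < ((p 0).eval x) ^ 2 := by
      rw [hp0]
      simp only [Polynomial.eval_C]
      have := Real.sqrt_pos.mpr (hb 0)
      positivity
    calc 0 < ((p 0).eval x) ^ 2 := h0
      _ ≤ ∑ j ∈ Finset.range m, ((p j).eval x) ^ 2 := by
          apply Finset.single_le_sum (f := fun j => ((p j).eval x) ^ 2)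
          · intro i _; positivity
          · simpa using (show 0 < m by omega)
  set S : ℕ → ℝ := fun m => ∑ j ∈ Finset.range m, ((p j).eval x) ^ 2 with hSdef
  have hSA : 0 < S (n - 1) := hS _ (by omega)
  have hSB : 0 < S n := hS _ (by omega)
  have hSC : 0 < S (n + 1) := hS _ (by omega)
  have hsucc : ∀ m : ℕ, S (m + 1) = S m + ((p m).eval x) ^ 2 := by
    intro m; simp [hSdef, Finset.sum_range_succ]
  have hn1 : (n - 1) + 1 = n := by omega
  -- key sqrt ratio identities
  have hratio : ∀ m : ℕ, 1 ≤ m →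
      Real.sqrt (1 + (C m x) ^ 2) = Real.sqrt (S (m + 1)) / Real.sqrt (S m) := by
    intro m hm
    have hSm : 0 < S m := hS m hm
    rw [hC m hm x]
    have h1 : 1 + ((p m).eval x / Real.sqrt (S m)) ^ 2 = S (m + 1) / S m := by
      rw [div_pow, Real.sq_sqrt hSm.le, hsucc m]
      field_simp
    rw [h1, Real.sqrt_div (hS _ (by omega)).le]
  -- rewrite everything in terms of p and S
  have hCn := hC n (by omega) x
  have hCn1 := hC (n - 1) (by omega) x
  have hCn2 := hC (n + 1) (by omega) x
  have hSeq : ∀ m, ∑ j ∈ Finset.range m, ((p j).eval x) ^ 2 = S m := fun m => rfl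
  rw [hSeq] at hCn hCn1 hCn2
  have hrA := hratio (n - 1) (by omega)
  have hrB := hratio n (by omega)
  rw [hn1] at hrA
  -- evaluated three-term recurrence
  have hrec' : x * (p n).eval x =
      Real.sqrt (b n) * (p (n - 1)).eval x + a n * (p n).eval x
        + Real.sqrt (b (n + 1)) * (p (n + 1)).eval x := by
    have h := congrArg (Polynomial.eval x) (hrec n)
    simp only [if_neg (by omega : ¬ n = 0), Polynomial.eval_add, Polynomial.eval_mul,
      Polynomial.eval_X, Polynomial.eval_smul, smul_eq_mul] at h
    exact h
  have hbn : (0:ℝ) < Real.sqrt (b (n + 1)) := Real.sqrt_pos.mpr (hb _)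
  have hsA : (0:ℝ) < Real.sqrt (S (n - 1)) := Real.sqrt_pos.mpr hSA
  have hsB : (0:ℝ) < Real.sqrt (S n) := Real.sqrt_pos.mpr hSB
  have hsC : (0:ℝ) < Real.sqrt (S (n + 1)) := Real.sqrt_pos.mpr hSC
  rw [hrA, hrB, hCn2, hCn, hCn1]
  field_simp
  nlinarith [mul_pos hsA (mul_pos hsB hsC), hrec', sq_nonneg (Real.sqrt (S n)),
    mul_pos hsA hsB]
end
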